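/- Let p be prime and T_{f[l,r]} the invertible linear CA over Z_{p²} with local rule f(x_l,...,x_r) = p·Σ_{i=l}^{r-1} β_i x_i + λ_r x_r (mod p²), gcd(p, λ_r) = 1, and 0 < l < r. Then both T_{f[l,r]} and its inverse T_{g[-(2r-l),-r]} are strong mixing with respect to the uniform Bernoulli measure. -/

import Mathlib

open MeasureTheory Filter
open scoped ENNReal Topology

instance (m : ℕ) : MeasurableSpace (ZMod m) := ⊤

/-!
The hypothesis on `μ` forces it to be the uniform Bernoulli measure, the product of uniform
measures on `ZMod p²`. Since `p² = 0` there, `T = p·B + λ·σʳ` (with `B` the sum over `[l, r-1]`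
and `σ` the shift) has the inverse `λ⁻¹·σ⁻ʳ - p·λ⁻²·B·σ⁻²ʳ`, again a linear cellular automaton,
with neighbourhood `[l - 2r, -r]`.

A surjective additive cellular automaton preserves the uniform Bernoulli measure: its marginal
on a finite window is the image of a uniform measure under a surjective group homomorphism, all
of whose fibres have the same size. If the neighbourhood `[u, v]` lies on one side of `0`,
then `n` iterations pull a cylinder over `[a, b]` back to a cylinder over
`[a + n u, b + n v]`, which is eventually disjoint from any fixed window, hence independent of
it. Mixing on cylinders extends to all measurable sets by approximation.
-/

open Function Finset
open scoped symmDiff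

section FiniteType

variable {α : Type*} [Fintype α] [MeasurableSpace α] [MeasurableSingletonClass α]

lemma MeasureTheory.measure_singleton_eq_inv_card {μ : Measure α} [IsProbabilityMeasure μ]
    (hμ : ∀ a b, μ {a} = μ {b}) (a : α) : μ {a} = (Fintype.card α : ℝ≥0∞)⁻¹ := by
  refine ENNReal.eq_inv_of_mul_eq_one_left ?_
  calc μ {a} * Fintype.card α = ∑ b : α, μ {b} := by simp [hμ _ a, mul_comm]
    _ = 1 := by rw [sum_measure_singleton, coe_univ, measure_univ]

lemma MeasureTheory.Measure.eq_of_measure_singleton_const {μ ν : Measure α}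
    [IsProbabilityMeasure μ] [IsProbabilityMeasure ν] (hμ : ∀ a b, μ {a} = μ {b})
    (hν : ∀ a b, ν {a} = ν {b}) : μ = ν :=
  Measure.ext_iff_singleton.mpr fun a => by
    rw [measure_singleton_eq_inv_card hμ, measure_singleton_eq_inv_card hν]

end FiniteType

lemma MeasureTheory.Measure.map_measure_singleton_const_of_surjective {H K : Type*}
    [AddGroup H] [Fintype H] [MeasurableSpace H] [MeasurableSingletonClass H] [AddGroup K]
    [MeasurableSpace K] [MeasurableSingletonClass K] {μ : Measure H} (hμ : ∀ a b, μ {a} = μ {b})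
    {f : H →+ K} (hf : Surjective f) (y z : K) : μ.map f {y} = μ.map f {z} := by
  classical
  have hfiber (w : K) : μ.map f {w} = #{g | f g = w} * μ {0} := by
    have : f ⁻¹' {w} = ↑({g | f g = w} : Finset H) := by ext; simp
    rw [Measure.map_apply (measurable_of_finite f) (measurableSet_singleton w), this,
      ← sum_measure_singleton, Finset.sum_congr rfl fun g _ => hμ g 0, Finset.sum_const,
      nsmul_eq_mul]
  rw [hfiber, hfiber, AddMonoidHom.card_fiber_eq_of_mem_range f (hf y) (hf z)]

lemma DependsOn.measurable_of_finite {ι G β : Type*} [MeasurableSpace G] [Countable G]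
    [MeasurableSingletonClass G] [MeasurableSpace β] [Nonempty β] {f : (ι → G) → β}
    {s : Set ι} (hs : s.Finite) (hf : DependsOn f s) : Measurable f := by
  have := hs.to_subtype
  obtain ⟨F, rfl⟩ := dependsOn_iff_exists_comp.mp hf
  exact (measurable_of_countable F).comp (Set.measurable_restrict s)

lemma DependsOn.preimage_image_restrict {ι : Type*} {X : ι → Type*} {A : Set (∀ i, X i)}
    {s : Finset ι} (hA : DependsOn (· ∈ A) s) : s.restrict ⁻¹' (s.restrict '' A) = A := by
  refine Set.Subset.antisymm (fun x ⟨y, hyA, hyx⟩ => ?_) (Set.subset_preimage_image _ _)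
  have : (y ∈ A) = (x ∈ A) := hA fun i hi => congrFun hyx ⟨i, hi⟩
  exact this ▸ hyA

theorem MeasureTheory.Measure.infinitePi_inter_of_dependsOn_disjoint {ι : Type*}
    {X : ι → Type*} [∀ i, MeasurableSpace (X i)] [∀ i, Countable (X i)]
    [∀ i, MeasurableSingletonClass (X i)]
    (μ : ∀ i, Measure (X i)) [∀ i, IsProbabilityMeasure (μ i)] {A B : Set (∀ i, X i)}
    {s t : Finset ι} (hA : DependsOn (· ∈ A) s) (hB : DependsOn (· ∈ B) t)
    (hst : Disjoint s t) :
    infinitePi μ (A ∩ B) = infinitePi μ A * infinitePi μ B := by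
  have hind : ProbabilityTheory.IndepFun s.restrict t.restrict (infinitePi μ) :=
    (ProbabilityTheory.iIndepFun_infinitePi (X := fun _ => id) fun _ => measurable_id)
      |>.indepFun_finset s t hst fun i => measurable_pi_apply i
  rw [← hA.preimage_image_restrict, ← hB.preimage_image_restrict]
  exact hind.measure_inter_preimage_eq_mul _ _ (Set.to_countable _).measurableSet
    (Set.to_countable _).measurableSet

noncomputable def uniformBernoulli (ι G : Type*) [Fintype G] [Nonempty G] [MeasurableSpace G] :
    Measure (ι → G) :=
  Measure.infinitePi fun _ : ι => (PMF.uniformOfFintype G).toMeasure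

section UniformBernoulli

variable {ι G : Type*} [Fintype G] [MeasurableSpace G]

instance [Nonempty G] : IsProbabilityMeasure (uniformBernoulli ι G) := by
  unfold uniformBernoulli; infer_instance

variable [MeasurableSingletonClass G]

lemma PMF.toMeasure_uniformOfFintype_singleton [Nonempty G] (a : G) :
    (PMF.uniformOfFintype G).toMeasure {a} = (Fintype.card G : ℝ≥0∞)⁻¹ := by
  rw [PMF.toMeasure_apply_singleton _ _ (measurableSet_singleton a), PMF.uniformOfFintype_apply]

lemma MeasureTheory.Measure.pi_uniformOfFintype_singleton [Nonempty G] {κ : Type*} [Fintype κ]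
    (g : κ → G) :
    Measure.pi (fun _ : κ => (PMF.uniformOfFintype G).toMeasure) {g}
      = (Fintype.card G : ℝ≥0∞)⁻¹ ^ Fintype.card κ := by
  rw [Measure.pi_singleton]
  simp only [PMF.toMeasure_uniformOfFintype_singleton, prod_const, card_univ]

section Cylinders

variable [Nonempty G] {μ : Measure (ℤ → G)}
  (hμ : ∀ (a : ℤ) (s : ℕ) (j : ℕ → G),
    μ {x | ∀ t : ℕ, t ≤ s → x (a + (t : ℤ)) = j t} = (Fintype.card G : ℝ≥0∞)⁻¹ ^ (s + 1))
include hμ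

lemma map_restrict_Icc_eq_of_measure_cylinder (N : ℕ) :
    μ.map (Finset.Icc (-N : ℤ) N).restrict
      = (uniformBernoulli ℤ G).map (Finset.Icc (-N : ℤ) N).restrict := by
  classical
  rw [uniformBernoulli, Measure.infinitePi_map_restrict]
  refine Measure.ext_iff_singleton.mpr fun g => ?_
  set g' : ℤ → G := Function.extend Subtype.val g fun _ => Classical.arbitrary G
  have hg' (i : Finset.Icc (-N : ℤ) N) : g' i = g i := Subtype.val_injective.extend_apply _ _ i
  have hset : (Finset.Icc (-N : ℤ) N).restrict (π := fun _ => G) ⁻¹' {g}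
      = {x | ∀ t : ℕ, t ≤ 2 * N → x (-N + (t : ℤ)) = g' (-N + t)} := by
    ext x
    simp only [Set.mem_preimage, Set.mem_singleton_iff]
    constructor
    · rintro rfl t ht
      exact (hg' ⟨-N + t, Finset.mem_Icc.mpr ⟨by omega, by omega⟩⟩).symm
    · intro h
      funext i
      obtain ⟨hlo, hhi⟩ := Finset.mem_Icc.mp i.2
      have := h (i + N : ℤ).toNat (by omega)
      rwa [show -N + ((i + N : ℤ).toNat : ℤ) = i by omega, hg'] at this
  rw [Measure.map_apply (Finset.measurable_restrict _) (measurableSet_singleton g), hset, hμ,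
    Measure.pi_uniformOfFintype_singleton, Fintype.card_coe, Int.card_Icc]
  congr 1
  omega

theorem eq_uniformBernoulli_of_measure_cylinder : μ = uniformBernoulli ℤ G := by
  refine IsProjectiveLimit.unique (fun J => ?_) (Measure.isProjectiveLimit_infinitePi _)
  obtain ⟨N, hN⟩ : ∃ N : ℕ, J ⊆ Finset.Icc (-N : ℤ) N := by
    refine ⟨J.sup Int.natAbs, fun i hi => ?_⟩
    have := Finset.le_sup (f := Int.natAbs) hi
    exact Finset.mem_Icc.mpr ⟨by omega, by omega⟩
  have hr₂ := Finset.measurable_restrict₂ (X := fun _ : ℤ => G) hN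
  rw [← Finset.restrict₂_comp_restrict hN, ← Measure.map_map hr₂ (Finset.measurable_restrict _),
    map_restrict_Icc_eq_of_measure_cylinder hμ,
    Measure.map_map hr₂ (Finset.measurable_restrict _), Finset.restrict₂_comp_restrict]
  exact Measure.infinitePi_map_restrict _

end Cylinders

theorem measurePreserving_uniformBernoulli_of_surjective [AddGroup G]
    (U : (ι → G) →+ (ι → G)) (hU : Surjective U)
    (hloc : ∀ i, ∃ W : Finset ι, DependsOn (fun x => U x i) W) :
    MeasurePreserving U (uniformBernoulli ι G) (uniformBernoulli ι G) := by
  classical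
  choose W hW using hloc
  have hUm : Measurable U :=
    measurable_pi_iff.mpr fun i => (hW i).measurable_of_finite (W i).finite_toSet
  refine ⟨hUm, ((Measure.isProjectiveLimit_infinitePi _).unique fun J => ?_).symm⟩
  set V := J.biUnion W
  let zeroExtend (K : Finset ι) : (K → G) →+ (ι → G) := ExtendByZero.hom G Subtype.val
  let F : (V → G) →+ (J → G) :=
    AddMonoidHom.mk' (fun w => J.restrict (U (zeroExtend V w))) fun a b => by simp only [map_add]; rfl
  have hfac : J.restrict ∘ U = F ∘ V.restrict := by
    funext x
    refine funext fun j => hW j.1 fun i hi => ?_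
    have hiV : i ∈ V := Finset.mem_biUnion.mpr ⟨j.1, j.2, hi⟩
    exact (Subtype.val_injective.extend_apply (V.restrict x) 0 ⟨i, hiV⟩).symm
  have hF : Surjective F := fun y => by
    obtain ⟨x, hx⟩ := hU (zeroExtend J y)
    refine ⟨V.restrict x, ?_⟩
    rw [← Function.comp_apply (f := F), ← hfac, Function.comp_apply, hx]
    exact funext fun i => Subtype.val_injective.extend_apply _ _ i
  have hpi (K : Finset ι) (a b : K → G) :
      Measure.pi (fun _ : K => (PMF.uniformOfFintype G).toMeasure) {a}
        = Measure.pi (fun _ : K => (PMF.uniformOfFintype G).toMeasure) {b} := by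
    rw [Measure.pi_uniformOfFintype_singleton, Measure.pi_uniformOfFintype_singleton]
  have := Measure.isProbabilityMeasure_map
    (μ := Measure.pi fun _ : V => (PMF.uniformOfFintype G).toMeasure)
    (measurable_of_finite F).aemeasurable
  calc ((uniformBernoulli ι G).map U).map J.restrict
      = ((uniformBernoulli ι G).map V.restrict).map F := by
        rw [Measure.map_map J.measurable_restrict hUm, hfac,
          Measure.map_map (measurable_of_finite F) V.measurable_restrict]
    _ = (Measure.pi fun _ : V => (PMF.uniformOfFintype G).toMeasure).map F := by
        rw [uniformBernoulli, Measure.infinitePi_map_restrict]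
    _ = Measure.pi fun _ : J => (PMF.uniformOfFintype G).toMeasure :=
        Measure.eq_of_measure_singleton_const
          (Measure.map_measure_singleton_const_of_surjective (hpi V) hF) (hpi J)

end UniformBernoulli

def IsStrongMixing {α : Type*} [MeasurableSpace α] (T : α → α) (μ : Measure α) : Prop :=
  ∀ A B : Set α, MeasurableSet A → MeasurableSet B →
    Tendsto (fun n : ℕ => μ (T^[n] ⁻¹' A ∩ B)) atTop (𝓝 (μ A * μ B))

lemma abs_mul_sub_mul_le_of_abs_le_one {a b c d : ℝ} (hb : |b| ≤ 1) (hc : |c| ≤ 1) :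
    |a * b - c * d| ≤ |a - c| + |b - d| :=
  calc |a * b - c * d| = |(a - c) * b + c * (b - d)| := by ring_nf
    _ ≤ |a - c| * |b| + |c| * |b - d| := by
        rw [← abs_mul, ← abs_mul]; exact abs_add_le _ _
    _ ≤ |a - c| + |b - d| := by
        gcongr
        · exact mul_le_of_le_one_right (abs_nonneg _) hb
        · exact mul_le_of_le_one_left (abs_nonneg _) hc

section StrongMixing

variable {α : Type*} [MeasurableSpace α] {μ : Measure α} [IsProbabilityMeasure μ]

lemma abs_measureReal_inter_sub_inter_le {s t s' t' : Set α} (hs : MeasurableSet s)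
    (ht : MeasurableSet t) (hs' : MeasurableSet s') (ht' : MeasurableSet t') :
    |μ.real (s ∩ t) - μ.real (s' ∩ t')| ≤ μ.real (s ∆ s') + μ.real (t ∆ t') :=
  calc |μ.real (s ∩ t) - μ.real (s' ∩ t')| ≤ μ.real ((s ∩ t) ∆ (s' ∩ t')) :=
        abs_measureReal_sub_le_measureReal_symmDiff (hs.inter ht).nullMeasurableSet
          (hs'.inter ht').nullMeasurableSet
    _ ≤ μ.real (s ∆ s' ∪ t ∆ t') := by
        refine measureReal_mono (fun x => ?_)
        simp only [Set.mem_symmDiff, Set.mem_inter_iff, Set.mem_union]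
        tauto
    _ ≤ μ.real (s ∆ s') + μ.real (t ∆ t') := measureReal_union_le _ _

lemma abs_measureReal_preimage_inter_sub_mul_le {T : α → α} (hT : MeasurePreserving T μ μ)
    (n : ℕ) {A A' B B' : Set α} (hA : MeasurableSet A) (hA' : MeasurableSet A')
    (hB : MeasurableSet B) (hB' : MeasurableSet B') :
    |μ.real (T^[n] ⁻¹' A ∩ B) - μ.real A * μ.real B|
      ≤ |μ.real (T^[n] ⁻¹' A' ∩ B') - μ.real A' * μ.real B'|
        + 2 * (μ.real (A ∆ A') + μ.real (B ∆ B')) := by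
  have hTn := hT.iterate n
  have hsets := abs_measureReal_inter_sub_inter_le (μ := μ) (hTn.measurable hA) hB
    (hTn.measurable hA') hB'
  rw [← Set.preimage_symmDiff, hTn.measureReal_preimage (hA.symmDiff hA').nullMeasurableSet]
    at hsets
  have abs_le_one (s : Set α) : |μ.real s| ≤ 1 :=
    abs_le.mpr ⟨by linarith [measureReal_nonneg (μ := μ) (s := s)], measureReal_le_one⟩
  have hprod := abs_mul_sub_mul_le_of_abs_le_one (a := μ.real A') (d := μ.real B)
    (abs_le_one B') (abs_le_one A)
  have hA'A := abs_measureReal_sub_le_measureReal_symmDiff (μ := μ) hA'.nullMeasurableSet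
    hA.nullMeasurableSet
  have hB'B := abs_measureReal_sub_le_measureReal_symmDiff (μ := μ) hB'.nullMeasurableSet
    hB.nullMeasurableSet
  rw [symmDiff_comm] at hA'A hB'B
  linarith [abs_sub_le (μ.real (T^[n] ⁻¹' A ∩ B)) (μ.real (T^[n] ⁻¹' A' ∩ B'))
    (μ.real A * μ.real B), abs_sub_le (μ.real (T^[n] ⁻¹' A' ∩ B')) (μ.real A' * μ.real B')
    (μ.real A * μ.real B)]

theorem IsStrongMixing.of_measureDense {T : α → α} (hT : MeasurePreserving T μ μ)
    {C : Set (Set α)} (hC : μ.MeasureDense C)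
    (hmix : ∀ A ∈ C, ∀ B ∈ C,
      Tendsto (fun n : ℕ => μ (T^[n] ⁻¹' A ∩ B)) atTop (𝓝 (μ A * μ B))) :
    IsStrongMixing T μ := by
  have toReal (A B : Set α) :
      Tendsto (fun n : ℕ => μ (T^[n] ⁻¹' A ∩ B)) atTop (𝓝 (μ A * μ B)) ↔
        Tendsto (fun n : ℕ => μ.real (T^[n] ⁻¹' A ∩ B)) atTop (𝓝 (μ.real A * μ.real B)) := by
    rw [← ENNReal.tendsto_toReal_iff (fun n => measure_ne_top _ _) (by finiteness),
      ENNReal.toReal_mul]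
    rfl
  intro A B hA hB
  rw [toReal, Metric.tendsto_atTop]
  intro ε hε
  obtain ⟨A', hA'C, hAA'⟩ := hC.approx A hA (measure_ne_top μ A) (ε / 8) (by positivity)
  obtain ⟨B', hB'C, hBB'⟩ := hC.approx B hB (measure_ne_top μ B) (ε / 8) (by positivity)
  replace hAA' : μ.real (A ∆ A') < ε / 8 := ENNReal.toReal_lt_of_lt_ofReal hAA'
  replace hBB' : μ.real (B ∆ B') < ε / 8 := ENNReal.toReal_lt_of_lt_ofReal hBB'
  obtain ⟨N, hN⟩ := Metric.tendsto_atTop.mp ((toReal A' B').mp (hmix A' hA'C B' hB'C)) (ε / 2)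
    (by positivity)
  refine ⟨N, fun n hn => ?_⟩
  have := abs_measureReal_preimage_inter_sub_mul_le hT n hA (hC.measurable A' hA'C) hB
    (hC.measurable B' hB'C)
  have hn' := hN n hn
  rw [Real.dist_eq] at hn' ⊢
  linarith

end StrongMixing

lemma exists_dependsOn_Icc_of_mem_measurableCylinders {X : ℤ → Type*}
    [∀ i, MeasurableSpace (X i)] {A : Set (∀ i, X i)} (hA : A ∈ measurableCylinders X) :
    ∃ a b : ℤ, DependsOn (· ∈ A) (Set.Icc a b) := by
  obtain ⟨s, S, -, rfl⟩ := (mem_measurableCylinders A).mp hA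
  obtain ⟨a, ha⟩ := s.bddBelow
  obtain ⟨b, hb⟩ := s.bddAbove
  refine ⟨a, b, fun x y hxy => ?_⟩
  have : s.restrict x = s.restrict y := funext fun i => hxy i ⟨ha i.2, hb i.2⟩
  simp only [mem_cylinder, this]

lemma eventually_disjoint_Icc_add_mul {u v : ℤ} (hside : 0 < u ∨ v < 0) (a b c d : ℤ) :
    ∀ᶠ n : ℕ in atTop, Disjoint (Finset.Icc (a + n * u) (b + n * v)) (Finset.Icc c d) := by
  simp only [Finset.disjoint_left, Finset.mem_Icc]
  rcases hside with hu | hv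
  · filter_upwards [eventually_ge_atTop (d - a + 1).toNat] with n hn i hi
    have : (n : ℤ) ≤ n * u := le_mul_of_one_le_right (by positivity) hu
    omega
  · filter_upwards [eventually_ge_atTop (b - c + 1).toNat] with n hn i hi
    have : (n : ℤ) * v ≤ -n := by nlinarith
    omega

section CellularAutomaton

variable {G : Type*} {U : (ℤ → G) → ℤ → G} {u v : ℤ}
  (hloc : ∀ n, DependsOn (fun x => U x n) (Set.Icc (n + u) (n + v)))
include hloc

lemma DependsOn.preimage_Icc {A : Set (ℤ → G)} {a b : ℤ}
    (hA : DependsOn (· ∈ A) (Set.Icc a b)) :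
    DependsOn (· ∈ U ⁻¹' A) (Set.Icc (a + u) (b + v)) := fun x y hxy =>
  hA fun n hn => hloc n fun i hi => hxy i ⟨by linarith [hn.1, hi.1], by linarith [hn.2, hi.2]⟩

lemma DependsOn.preimage_iterate_Icc {A : Set (ℤ → G)} {a b : ℤ}
    (hA : DependsOn (· ∈ A) (Set.Icc a b)) (k : ℕ) :
    DependsOn (· ∈ U^[k] ⁻¹' A) (Set.Icc (a + k * u) (b + k * v)) := by
  induction k generalizing A a b with
  | zero => simpa using hA
  | succ k ih =>
    rw [Function.iterate_succ', Set.preimage_comp]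
    convert ih (hA.preimage_Icc hloc) using 2 <;> push_cast <;> ring

theorem isStrongMixing_uniformBernoulli_of_surjective [AddGroup G] [Fintype G]
    [MeasurableSpace G] [MeasurableSingletonClass G] (hadd : ∀ x y, U (x + y) = U x + U y)
    (hU : Surjective U) (hside : 0 < u ∨ v < 0) :
    IsStrongMixing U (uniformBernoulli ℤ G) := by
  have hmp : MeasurePreserving U (uniformBernoulli ℤ G) (uniformBernoulli ℤ G) :=
    measurePreserving_uniformBernoulli_of_surjective (AddMonoidHom.mk' U hadd) hU
      fun n => ⟨Finset.Icc (n + u) (n + v), by rw [Finset.coe_Icc]; exact hloc n⟩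
  refine IsStrongMixing.of_measureDense hmp (.of_generateFrom_isSetAlgebra_finite _
    isSetAlgebra_measurableCylinders generateFrom_measurableCylinders.symm) ?_
  intro A hA B hB
  obtain ⟨a, b, hAab⟩ := exists_dependsOn_Icc_of_mem_measurableCylinders hA
  obtain ⟨c, d, hBcd⟩ := exists_dependsOn_Icc_of_mem_measurableCylinders hB
  refine tendsto_const_nhds.congr' ?_
  filter_upwards [eventually_disjoint_Icc_add_mul hside a b c d] with n hn
  rw [uniformBernoulli, Measure.infinitePi_inter_of_dependsOn_disjoint _
    (by simpa only [Finset.coe_Icc] using hAab.preimage_iterate_Icc hloc n)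
    (by simpa only [Finset.coe_Icc] using hBcd) hn, ← uniformBernoulli,
    (hmp.iterate n).measure_preimage
      (MeasurableSet.of_mem_measurableCylinders hA).nullMeasurableSet]

end CellularAutomaton

section NilpotentLinearCA

variable {R : Type*} [CommRing R] (P : R) (β : ℤ → R) (c L : R) (l r : ℤ)

noncomputable def linearCA (x : ℤ → R) (n : ℤ) : R :=
  P * ∑ i ∈ Finset.Icc l (r - 1), β i * x (n + i) + c * x (n + r)

noncomputable def linearCAInv (y : ℤ → R) (m : ℤ) : R :=
  L * y (m - r) - P * L ^ 2 * ∑ i ∈ Finset.Icc l (r - 1), β i * y (m + i - 2 * r)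

variable {P β c L l r}

lemma linearCA_add (x y : ℤ → R) :
    linearCA P β c l r (x + y) = linearCA P β c l r x + linearCA P β c l r y := by
  funext n
  simp only [linearCA, Pi.add_apply, mul_add, Finset.sum_add_distrib]
  ring

lemma linearCAInv_add (x y : ℤ → R) :
    linearCAInv P β L l r (x + y) = linearCAInv P β L l r x + linearCAInv P β L l r y := by
  funext n
  simp only [linearCAInv, Pi.add_apply, mul_add, Finset.sum_add_distrib]
  ring

lemma dependsOn_linearCA (hlr : l ≤ r) (n : ℤ) :
    DependsOn (fun x => linearCA P β c l r x n) (Set.Icc (n + l) (n + r)) := fun x y hxy => by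
  simp only [linearCA, hxy (n + r) ⟨by omega, le_rfl⟩]
  congr 2
  refine Finset.sum_congr rfl fun i hi => ?_
  rw [Finset.mem_Icc] at hi
  rw [hxy (n + i) ⟨by omega, by omega⟩]

lemma dependsOn_linearCAInv (hlr : l ≤ r) (m : ℤ) :
    DependsOn (fun y => linearCAInv P β L l r y m) (Set.Icc (m + (l - 2 * r)) (m + -r)) :=
  fun x y hxy => by
  simp only [linearCAInv, hxy (m - r) ⟨by omega, by omega⟩]
  congr 2
  refine Finset.sum_congr rfl fun i hi => ?_
  rw [Finset.mem_Icc] at hi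
  rw [hxy (m + i - 2 * r) ⟨by omega, by omega⟩]

lemma leftInverse_linearCAInv_linearCA (β l r) (hP : P * P = 0) (hL : L * c = 1) :
    Function.LeftInverse (linearCAInv P β L l r) (linearCA P β c l r) := fun x => by
  funext m
  set Q := ∑ i ∈ Finset.Icc l (r - 1), β i * x (m + i - r)
  set D := ∑ i ∈ Finset.Icc l (r - 1),
    β i * ∑ j ∈ Finset.Icc l (r - 1), β j * x (m + i - 2 * r + j)
  have hQ : ∑ j ∈ Finset.Icc l (r - 1), β j * x (m - r + j) = Q :=
    Finset.sum_congr rfl fun j _ => by ring_nf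
  have hinner : ∑ i ∈ Finset.Icc l (r - 1), β i * linearCA P β c l r x (m + i - 2 * r)
      = P * D + c * Q := by
    simp only [linearCA, D, Q, mul_add, Finset.sum_add_distrib, Finset.mul_sum]
    congr 1
    · exact Finset.sum_congr rfl fun i _ => Finset.sum_congr rfl fun j _ => by ring
    · exact Finset.sum_congr rfl fun i _ => by ring_nf
  simp only [linearCAInv, hinner]
  rw [linearCA, hQ, sub_add_cancel]
  linear_combination (x m - L * P * Q) * hL - L ^ 2 * D * hP

lemma leftInverse_linearCA_linearCAInv (β l r) (hP : P * P = 0) (hL : L * c = 1) :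
    Function.LeftInverse (linearCA P β c l r) (linearCAInv P β L l r) := fun y => by
  funext n
  set Q := ∑ i ∈ Finset.Icc l (r - 1), β i * y (n + i - r)
  set D := ∑ i ∈ Finset.Icc l (r - 1),
    β i * ∑ j ∈ Finset.Icc l (r - 1), β j * y (n + i + j - 2 * r)
  have hQ : ∑ j ∈ Finset.Icc l (r - 1), β j * y (n + r + j - 2 * r) = Q :=
    Finset.sum_congr rfl fun j _ => by ring_nf
  have hinner : ∑ i ∈ Finset.Icc l (r - 1), β i * linearCAInv P β L l r y (n + i)
      = L * Q - P * L ^ 2 * D := by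
    simp only [linearCAInv, D, Q, mul_sub, Finset.sum_sub_distrib, Finset.mul_sum]
    congr 1
    · exact Finset.sum_congr rfl fun i _ => by ring
    · exact Finset.sum_congr rfl fun i _ => Finset.sum_congr rfl fun j _ => by ring_nf
  simp only [linearCA, hinner]
  rw [linearCAInv, hQ, add_sub_cancel_right]
  linear_combination (y n - L * P * Q) * hL - L ^ 2 * D * hP

end NilpotentLinearCA

instance (m : ℕ) : MeasurableSingletonClass (ZMod m) := ⟨fun _ => trivial⟩

theorem stmt13_general (p : ℕ) (hp : p.Prime) (l r : ℤ) (hl : 0 < l) (hlr : l < r)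
    (β : ℤ → ZMod (p ^ 2)) (lamr : ZMod (p ^ 2)) (hunit : IsUnit lamr)
    (T : (ℤ → ZMod (p ^ 2)) → ℤ → ZMod (p ^ 2))
    (hT : ∀ x n, T x n =
      (p : ZMod (p ^ 2)) * ∑ i ∈ Finset.Icc l (r - 1), β i * x (n + i) + lamr * x (n + r))
    (μ : Measure (ℤ → ZMod (p ^ 2)))
    (hμ : ∀ (a : ℤ) (s : ℕ) (j : ℕ → ZMod (p ^ 2)),
      μ {x | ∀ t : ℕ, t ≤ s → x (a + (t : ℤ)) = j t} = (((p ^ 2 : ℕ) : ℝ≥0∞))⁻¹ ^ (s + 1)) :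
    Function.Bijective T ∧
    (∀ A B : Set (ℤ → ZMod (p ^ 2)), MeasurableSet A → MeasurableSet B →
      Tendsto (fun n : ℕ => μ (T^[n] ⁻¹' A ∩ B)) atTop (𝓝 (μ A * μ B))) ∧
    (∀ S : (ℤ → ZMod (p ^ 2)) → ℤ → ZMod (p ^ 2),
      (∀ x, S (T x) = x) → (∀ x, T (S x) = x) →
      ∀ A B : Set (ℤ → ZMod (p ^ 2)), MeasurableSet A → MeasurableSet B →
        Tendsto (fun n : ℕ => μ (S^[n] ⁻¹' A ∩ B)) atTop (𝓝 (μ A * μ B))) := by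
  have : NeZero (p ^ 2) := ⟨pow_ne_zero 2 hp.ne_zero⟩
  obtain rfl : μ = uniformBernoulli ℤ (ZMod (p ^ 2)) :=
    eq_uniformBernoulli_of_measure_cylinder fun a s j => by rw [ZMod.card]; exact hμ a s j
  obtain rfl : T = linearCA (p : ZMod (p ^ 2)) β lamr l r := funext fun x => funext (hT x)
  have hP : (p : ZMod (p ^ 2)) * p = 0 := by rw [← Nat.cast_mul, ← sq, ZMod.natCast_self]
  obtain ⟨L, hL⟩ : ∃ L, L * lamr = 1 := hunit.exists_left_inv
  have hleft := leftInverse_linearCAInv_linearCA β l r hP hL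
  have hright := leftInverse_linearCA_linearCAInv β l r hP hL
  refine ⟨Function.bijective_iff_has_inverse.mpr ⟨_, hleft, hright⟩,
    isStrongMixing_uniformBernoulli_of_surjective (dependsOn_linearCA hlr.le) linearCA_add
      hright.surjective (Or.inl hl), fun S hS _ => ?_⟩
  obtain rfl : S = linearCAInv (p : ZMod (p ^ 2)) β L l r :=
    funext fun y => by rw [← hS (linearCAInv _ β L l r y), hright]
  exact isStrongMixing_uniformBernoulli_of_surjective (dependsOn_linearCAInv hlr.le)
    linearCAInv_add hleft.surjective (Or.inr (by omega))

/-- Let `p` be prime and `T_{f[l,r]}` the invertible linear CA over `ZMod p²` with local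
rule `f(x_l,...,x_r) = p·Σ_{i=l}^{r-1} β_i x_i + λ_r x_r (mod p²)`, `λ_r` a unit
(`gcd(p,λ_r) = 1`), `0 < l < r`. Then `T_{f[l,r]}` is bijective, and both `T_{f[l,r]}` and
its inverse are strong mixing with respect to the uniform Bernoulli measure. -/
theorem stmt13 (p : ℕ) (hp : p.Prime) (l r : ℤ) (hl : 0 < l) (hlr : l < r)
    (β : ℤ → ZMod (p ^ 2)) (lamr : ZMod (p ^ 2)) (hunit : IsUnit lamr)
    (T : (ℤ → ZMod (p ^ 2)) → ℤ → ZMod (p ^ 2))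
    (hT : ∀ x n, T x n =
      (p : ZMod (p ^ 2)) * ∑ i ∈ Finset.Icc l (r - 1), β i * x (n + i) + lamr * x (n + r))
    (μ : Measure (ℤ → ZMod (p ^ 2))) [IsProbabilityMeasure μ]
    (hμ : ∀ (a : ℤ) (s : ℕ) (j : ℕ → ZMod (p ^ 2)),
      μ {x | ∀ t : ℕ, t ≤ s → x (a + (t : ℤ)) = j t} = (((p ^ 2 : ℕ) : ℝ≥0∞))⁻¹ ^ (s + 1)) :
    Function.Bijective T ∧
    (∀ A B : Set (ℤ → ZMod (p ^ 2)), MeasurableSet A → MeasurableSet B →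
      Tendsto (fun n : ℕ => μ (T^[n] ⁻¹' A ∩ B)) atTop (𝓝 (μ A * μ B))) ∧
    (∀ S : (ℤ → ZMod (p ^ 2)) → ℤ → ZMod (p ^ 2),
      (∀ x, S (T x) = x) → (∀ x, T (S x) = x) →
      ∀ A B : Set (ℤ → ZMod (p ^ 2)), MeasurableSet A → MeasurableSet B →
        Tendsto (fun n : ℕ => μ (S^[n] ⁻¹' A ∩ B)) atTop (𝓝 (μ A * μ B))) :=
  stmt13_general p hp l r hl hlr β lamr hunit T hT μ hμ
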